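/- For all regular trees 𝔸, 𝔹 ∈ 𝔗: 𝔸 ≈T 𝔹 if and only if ⟨𝔸⟩ ≈∅ ⟨𝔹⟩, where ⟨·⟩ is the translation into n-ary-union trees and ≈∅ is the equivalence relation up-to the empty relation. -/
import Mathlib


set_option maxHeartbeats 1000000

namespace CAPPaper

/- ## μ-types: datatype variables `var true v`, type variables `var false v`,
   type constants `const c` (with `const 0` also playing the role of junk/∘),
   type application `app`, function types `arrow`, unions `union`,
   recursive types `mu`. -/

inductive MuTy : Type
  | var : Bool → ℕ → MuTy
  | const : ℕ → MuTy
  | app : MuTy → MuTy → MuTy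
  | arrow : MuTy → MuTy → MuTy
  | union : MuTy → MuTy → MuTy
  | mu : Bool → ℕ → MuTy → MuTy

namespace MuTy

/-- Naive substitution of `T` for the variable `(b, v)`; binders shadow. -/
def subst (b : Bool) (v : ℕ) (T : MuTy) : MuTy → MuTy
  | var b' v' => if b' = b ∧ v' = v then T else var b' v'
  | const c => const c
  | app A B => app (subst b v T A) (subst b v T B)
  | arrow A B => arrow (subst b v T A) (subst b v T B)
  | union A B => union (subst b v T A) (subst b v T B)
  | mu b' v' A => if b' = b ∧ v' = v then mu b' v' A else mu b' v' (subst b v T A)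

/-- The variable `(b, v)` occurs free. -/
def FreeIn (b : Bool) (v : ℕ) : MuTy → Prop
  | var b' v' => b' = b ∧ v' = v
  | const _ => False
  | app A B => FreeIn b v A ∨ FreeIn b v B
  | arrow A B => FreeIn b v A ∨ FreeIn b v B
  | union A B => FreeIn b v A ∨ FreeIn b v B
  | mu b' v' A => ¬(b' = b ∧ v' = v) ∧ FreeIn b v A

/-- The variable `(b, v)` occurs only under `⊃` or `@`. -/
def Guarded (b : Bool) (v : ℕ) : MuTy → Prop
  | var b' v' => ¬(b' = b ∧ v' = v)
  | const _ => True
  | app _ _ => True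
  | arrow _ _ => True
  | union A B => Guarded b v A ∧ Guarded b v B
  | mu b' v' A => (b' = b ∧ v' = v) ∨ Guarded b v A

/-- Contractive μ-types. -/
def Contr : MuTy → Prop
  | var _ _ => True
  | const _ => True
  | app A B => Contr A ∧ Contr B
  | arrow A B => Contr A ∧ Contr B
  | union A B => Contr A ∧ Contr B
  | mu b v A => Guarded b v A ∧ Contr A

/-- μ-datatypes. -/
inductive IsData : MuTy → Prop
  | var (v : ℕ) : IsData (var true v)
  | const (c : ℕ) : IsData (const c)
  | app {D : MuTy} (A : MuTy) : IsData D → IsData (app D A)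
  | union {D D' : MuTy} : IsData D → IsData D' → IsData (union D D')
  | mu {v : ℕ} {D : MuTy} : IsData D → IsData (mu true v D)

def IsMu : MuTy → Prop
  | mu _ _ _ => True
  | _ => False

def IsUnion : MuTy → Prop
  | union _ _ => True
  | _ => False

def IsAtom : MuTy → Prop
  | var _ _ => True
  | const _ => True
  | _ => False

/-- The non-union components of a maximal union, in left-to-right order. -/
def comps : MuTy → List MuTy
  | union A B => comps A ++ comps B
  | A => [A]

/-- Replace the `i`-th (left-to-right) non-union component of a maximal union. -/
def replaceComp : MuTy → ℕ → MuTy → MuTy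
  | union A B, i, N =>
      if i < (comps A).length then union (replaceComp A i N) B
      else union A (replaceComp B (i - (comps A).length) N)
  | A, i, N => if i = 0 then N else A

end MuTy

/- ## Type equivalence `≈μ` -/

inductive EqMu : MuTy → MuTy → Prop
  | refl (A : MuTy) : EqMu A A
  | symm {A B : MuTy} : EqMu A B → EqMu B A
  | trans {A B C : MuTy} : EqMu A B → EqMu B C → EqMu A C
  | app {D D' A A' : MuTy} : EqMu D D' → EqMu A A' → EqMu (.app D A) (.app D' A')
  | arrow {A A' B B' : MuTy} : EqMu A A' → EqMu B B' → EqMu (.arrow A B) (.arrow A' B')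
  | union {A A' B B' : MuTy} : EqMu A A' → EqMu B B' → EqMu (.union A B) (.union A' B')
  | mu {A B : MuTy} (b : Bool) (v : ℕ) : EqMu A B → EqMu (.mu b v A) (.mu b v B)
  | idem (A : MuTy) : EqMu (.union A A) A
  | comm (A B : MuTy) : EqMu (.union A B) (.union B A)
  | assoc (A B C : MuTy) : EqMu (.union A (.union B C)) (.union (.union A B) C)
  | fold (b : Bool) (v : ℕ) (A : MuTy) : EqMu (.mu b v A) (MuTy.subst b v (.mu b v A) A)
  | contract {A B : MuTy} {b : Bool} {v : ℕ} :
      EqMu A (MuTy.subst b v A B) → MuTy.Contr (.mu b v B) → EqMu A (.mu b v B)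

/- ## Subtyping `Σ ⊢ A ≤μ B` -/

inductive SubMu : Set ((Bool × ℕ) × (Bool × ℕ)) → MuTy → MuTy → Prop
  | refl (SS) (A : MuTy) : SubMu SS A A
  | hyp {SS} {V W : Bool × ℕ} : (V, W) ∈ SS → SubMu SS (.var V.1 V.2) (.var W.1 W.2)
  | eq {A B : MuTy} (SS) : EqMu A B → SubMu SS A B
  | trans {SS} {A B C : MuTy} : SubMu SS A B → SubMu SS B C → SubMu SS A C
  | app {SS} {D D' A A' : MuTy} : SubMu SS D D' → SubMu SS A A' →
      SubMu SS (.app D A) (.app D' A')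
  | arrow {SS} {A A' B B' : MuTy} : SubMu SS A A' → SubMu SS B B' →
      SubMu SS (.arrow A' B) (.arrow A B')
  | unionL {SS} {A B C : MuTy} : SubMu SS A C → SubMu SS B C → SubMu SS (.union A B) C
  | unionR1 {SS} {A B C : MuTy} : SubMu SS A B → SubMu SS A (.union B C)
  | unionR2 {SS} {A B C : MuTy} : SubMu SS A C → SubMu SS A (.union B C)
  | mu {SS} {V W : Bool × ℕ} {A B : MuTy} :
      SubMu (insert (V, W) SS) A B →
      ¬ MuTy.FreeIn W.1 W.2 A → ¬ MuTy.FreeIn V.1 V.2 B →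
      SubMu SS (.mu V.1 V.2 A) (.mu W.1 W.2 B)

/-- `A ≤μ B` (empty set of hypotheses). -/
def Sub (A B : MuTy) : Prop := SubMu ∅ A B

/- ## Coinductive equivalence `≈⃗μ` and subtyping `≤⃗μ` on μ-types,
   given via their generating functions and greatest fixed points. -/

/-- One-step unfolding of the rules for `≈⃗μ`. -/
def EqVecStep (R : MuTy → MuTy → Prop) (A B : MuTy) : Prop :=
  (MuTy.IsAtom A ∧ A = B)
  ∨ (∃ D A' D' B', A = .app D A' ∧ B = .app D' B' ∧ R D D' ∧ R A' B')
  ∨ (∃ A1 A2 B1 B2, A = .arrow A1 A2 ∧ B = .arrow B1 B2 ∧ R A1 B1 ∧ R A2 B2)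
  ∨ (∃ i b v C, (∀ X ∈ A.comps.take i, ¬ X.IsMu) ∧ A.comps[i]? = some (.mu b v C) ∧
      R (A.replaceComp i (MuTy.subst b v (.mu b v C) C)) B)
  ∨ ((∀ X ∈ A.comps, ¬ X.IsMu) ∧
      ∃ j b w C, (∀ Y ∈ B.comps.take j, ¬ Y.IsMu) ∧ B.comps[j]? = some (.mu b w C) ∧
      R A (B.replaceComp j (MuTy.subst b w (.mu b w C) C)))
  ∨ ((A.IsUnion ∨ B.IsUnion) ∧ (∀ X ∈ A.comps, ¬ X.IsMu) ∧ (∀ Y ∈ B.comps, ¬ Y.IsMu) ∧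
      (∀ X ∈ A.comps, ∃ Y ∈ B.comps, R X Y) ∧ (∀ Y ∈ B.comps, ∃ X ∈ A.comps, R X Y))

/-- The generating function `Φ≈⃗μ`. -/
def PhiEqVec (X : Set (MuTy × MuTy)) : Set (MuTy × MuTy) :=
  {p | EqVecStep (fun a b => (a, b) ∈ X) p.1 p.2}

/-- `A ≈⃗μ B`: the greatest fixed point of `Φ≈⃗μ`. -/
def EqVec (A B : MuTy) : Prop :=
  ∃ R : MuTy → MuTy → Prop, (∀ x y, R x y → EqVecStep R x y) ∧ R A B

/-- One-step unfolding of the rules for `≤⃗μ`. -/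
def SubVecStep (R : MuTy → MuTy → Prop) (A B : MuTy) : Prop :=
  (MuTy.IsAtom A ∧ A = B)
  ∨ (∃ D A' D' B', A = .app D A' ∧ B = .app D' B' ∧ R D D' ∧ R A' B')
  ∨ (∃ A1 A2 B1 B2, A = .arrow A1 A2 ∧ B = .arrow B1 B2 ∧ R B1 A1 ∧ R A2 B2)
  ∨ (∃ b v A', A = .mu b v A' ∧ R (MuTy.subst b v A A') B)
  ∨ (¬ A.IsMu ∧ ∃ b w B', B = .mu b w B' ∧ R A (MuTy.subst b w B B'))
  ∨ (A.IsUnion ∧ ¬ B.IsMu ∧ ∀ A' ∈ A.comps, R A' B)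
  ∨ (¬ A.IsUnion ∧ ¬ A.IsMu ∧ B.IsUnion ∧ ∃ B' ∈ B.comps, R A B')

/-- The generating function `Φ≤⃗μ`. -/
def PhiSubVec (X : Set (MuTy × MuTy)) : Set (MuTy × MuTy) :=
  {p | SubVecStep (fun a b => (a, b) ∈ X) p.1 p.2}

/-- `A ≤⃗μ B`: the greatest fixed point of `Φ≤⃗μ`. -/
def SubVec (A B : MuTy) : Prop :=
  ∃ R : MuTy → MuTy → Prop, (∀ x y, R x y → SubVecStep R x y) ∧ R A B

/- ## Possibly infinite trees 𝔗 -/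

inductive Leaf : Type
  | var : Bool → ℕ → Leaf
  | const : ℕ → Leaf
  | circ : Leaf
deriving DecidableEq

inductive TSym : Type
  | leaf : Leaf → TSym
  | app : TSym
  | arrow : TSym
  | union : TSym
deriving DecidableEq

/-- Raw (partial) trees: a labelling of binary positions. -/
abbrev PTree := List Bool → Option TSym

def childT (t : PTree) (i : Bool) : PTree := fun π => t (i :: π)

def subtreeAt (t : PTree) (ρ : List Bool) : PTree := fun π => t (ρ ++ π)

def TSym.IsBinary : TSym → Prop
  | .leaf _ => False
  | _ => True

/-- The set 𝔗 of regular possibly infinite trees with no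
    infinite branch consisting solely of ⊕-nodes. -/
structure ITree where
  label : PTree
  root_isSome : (label []).isSome
  child_iff : ∀ (π : List Bool) (i : Bool),
      (label (π ++ [i])).isSome ↔ ∃ s, label π = some s ∧ s.IsBinary
  regular : {u : PTree | ∃ π : List Bool, (label π).isSome ∧ u = subtreeAt label π}.Finite
  noUnionBranch : ¬ ∃ (π : List Bool) (g : ℕ → Bool),
      ∀ n : ℕ, label (π ++ (List.range n).map g) = some TSym.union

/- ## Truncation ⌊·⌋k -/

def truncAux : List Bool → ℕ → PTree → Option TSym
  | [], 0, _ => some (.leaf .circ)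
  | [], _ + 1, t => t []
  | _ :: _, 0, _ => none
  | i :: π, k + 1, t =>
      match t [] with
      | some .union => truncAux π (k + 1) (childT t i)
      | some .app => truncAux π k (childT t i)
      | some .arrow => truncAux π k (childT t i)
      | _ => none

/-- The truncation of a tree at depth `k`. -/
def trunc (k : ℕ) (t : PTree) : PTree := fun π => truncAux π k t

/- ## The infinite unfolding ⟦·⟧ of a μ-type -/

def muDepth : MuTy → ℕ
  | .mu _ _ A => muDepth A + 1
  | _ => 0

def headUnfold : ℕ → MuTy → MuTy
  | 0, A => A
  | n + 1, .mu b v A => headUnfold n (MuTy.subst b v (.mu b v A) A)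
  | _ + 1, A => A

/-- Unfold the head μ-binders away (total; fully unfolds contractive types). -/
def hnf (A : MuTy) : MuTy := headUnfold (muDepth A) A

def unfoldLabel : List Bool → MuTy → Option TSym
  | [], A =>
      match hnf A with
      | .var b v => some (.leaf (.var b v))
      | .const c => some (.leaf (.const c))
      | .app _ _ => some .app
      | .arrow _ _ => some .arrow
      | .union _ _ => some .union
      | .mu _ _ _ => none
  | i :: π, A =>
      match hnf A with
      | .app B C => unfoldLabel π (if i then C else B)
      | .arrow B C => unfoldLabel π (if i then C else B)
      | .union B C => unfoldLabel π (if i then C else B)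
      | _ => none

/-- `⟦A⟧`, the complete unfolding of a μ-type into a tree. -/
def treeOf (A : MuTy) : PTree := fun π => unfoldLabel π A

/- ## Maximal-union components of a tree -/

/-- `ρ` reaches, through ⊕-nodes only, a non-⊕ node of `t`:
    the components of the maximal union decomposition of `t`. -/
def IsCompPath (t : PTree) (ρ : List Bool) : Prop :=
  (∀ ρ' : List Bool, ρ' <+: ρ → ρ' ≠ ρ → t ρ' = some TSym.union) ∧
  (t ρ).isSome ∧ t ρ ≠ some TSym.union

def compPaths (t : PTree) : Set (List Bool) := {ρ | IsCompPath t ρ}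

/- ## Coinductive equality ≈T and subtyping ≤T on trees -/

def EqTStep (R : PTree → PTree → Prop) (A B : PTree) : Prop :=
  (∃ a, A [] = some (.leaf a) ∧ B [] = some (.leaf a))
  ∨ (A [] = some .app ∧ B [] = some .app ∧
      R (childT A false) (childT B false) ∧ R (childT A true) (childT B true))
  ∨ (A [] = some .arrow ∧ B [] = some .arrow ∧
      R (childT A false) (childT B false) ∧ R (childT A true) (childT B true))
  ∨ ((A [] = some .union ∨ B [] = some .union) ∧
      (∀ ρ ∈ compPaths A, ∃ ρ' ∈ compPaths B, R (subtreeAt A ρ) (subtreeAt B ρ')) ∧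
      (∀ ρ' ∈ compPaths B, ∃ ρ ∈ compPaths A, R (subtreeAt A ρ) (subtreeAt B ρ')))

/-- `≈T`, as the greatest fixed point of its generating function. -/
def EqT (A B : PTree) : Prop :=
  ∃ R : PTree → PTree → Prop, (∀ x y, R x y → EqTStep R x y) ∧ R A B

def SubTStep (R : PTree → PTree → Prop) (A B : PTree) : Prop :=
  (∃ a, A [] = some (.leaf a) ∧ B [] = some (.leaf a))
  ∨ (A [] = some .app ∧ B [] = some .app ∧
      R (childT A false) (childT B false) ∧ R (childT A true) (childT B true))
  ∨ (A [] = some .arrow ∧ B [] = some .arrow ∧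
      R (childT B false) (childT A false) ∧ R (childT A true) (childT B true))
  ∨ (A [] = some .union ∧ B [] ≠ some .union ∧
      ∀ ρ ∈ compPaths A, R (subtreeAt A ρ) B)
  ∨ (A [] ≠ some .union ∧ B [] = some .union ∧
      ∃ ρ' ∈ compPaths B, R A (subtreeAt B ρ'))
  ∨ (A [] = some .union ∧ B [] = some .union ∧
      ∀ ρ ∈ compPaths A, ∃ ρ' ∈ compPaths B, R (subtreeAt A ρ) (subtreeAt B ρ'))

/-- `≤T`, as the greatest fixed point of its generating function. -/
def SubT (A B : PTree) : Prop :=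
  ∃ R : PTree → PTree → Prop, (∀ x y, R x y → SubTStep R x y) ∧ R A B

/- ## Multi-hole μ⊕-contexts -/

inductive MuCtx : Type
  | hole : MuCtx
  | mu : Bool → ℕ → MuCtx → MuCtx
  | union : MuCtx → MuCtx → MuCtx

namespace MuCtx

def holes : MuCtx → ℕ
  | hole => 1
  | mu _ _ C => C.holes
  | union C D => C.holes + D.holes

def fill : MuCtx → List MuTy → MuTy
  | hole, As => As.headD (.const 0)
  | mu b v C, As => .mu b v (C.fill As)
  | union C D, As => .union (C.fill (As.take C.holes)) (D.fill (As.drop C.holes))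

/-- Positions of the holes, in left-to-right order. -/
def holePos : MuCtx → List (List Bool)
  | hole => [[]]
  | mu _ _ C => C.holePos.map (fun π => false :: π)
  | union C D => C.holePos.map (fun π => false :: π) ++ D.holePos.map (fun π => true :: π)

/-- Projection of the hole at position `π` of `𝖠[A⃗]`. -/
def proj : MuCtx → List MuTy → List Bool → Option MuTy
  | hole, As, [] => As.head?
  | mu b v C, As, false :: π =>
      (proj C As π).map (MuTy.subst b v (.mu b v (C.fill As)))
  | union C _D, As, false :: π => proj C (As.take C.holes) π
  | union C D, As, true :: π => proj D (As.drop C.holes) π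
  | _, _, _ => none

/-- Erase all μ-binders. -/
def erase : MuCtx → MuCtx
  | hole => hole
  | mu _ _ C => C.erase
  | union C D => .union C.erase D.erase

/-- ⊕-contexts (no μ-binders). -/
def IsUnionCtx : MuCtx → Prop
  | hole => True
  | mu _ _ _ => False
  | union C D => C.IsUnionCtx ∧ D.IsUnionCtx

/-- Filling a (μ-erased) context with trees. -/
def fillT : MuCtx → List PTree → List Bool → Option TSym
  | hole, ts, π => (ts.headD (fun _ => none)) π
  | mu _ _ C, ts, π => fillT C ts π
  | union _ _, _, [] => some TSym.union
  | union C _D, ts, false :: π => fillT C (ts.take C.holes) π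
  | union C D, ts, true :: π => fillT D (ts.drop C.holes) π

end MuCtx

/- ## n-ary-union trees 𝔗ⁿ -/

inductive NSym : Type
  | leaf : Leaf → NSym
  | app : NSym
  | arrow : NSym
  | union : ℕ → NSym

abbrev PTreeN := List ℕ → Option NSym

def childN (t : PTreeN) (j : ℕ) : PTreeN := fun π => t (j :: π)

def IsUnionRootN (t : PTreeN) : Prop := ∃ n, t [] = some (.union n)

/-- A key realising the left-to-right (lexicographic) order of prefix-free
    sets of positions. -/
def pathKey : List Bool → ℚ
  | [] => 0
  | b :: ρ => (if b then 1 else 0) + pathKey ρ / 2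

/-- `ρ` is the `j`-th (in left-to-right order, starting from 0) component path of `t`. -/
def IsNthComp (t : PTree) (j : ℕ) (ρ : List Bool) : Prop :=
  IsCompPath t ρ ∧ {ρ' | IsCompPath t ρ' ∧ pathKey ρ' < pathKey ρ}.ncard = j

-- The translation ⟨·⟩ : 𝔗 → 𝔗ⁿ flattening maximal unions into n-ary unions.
open Classical in
noncomputable def transLabel : List ℕ → PTree → Option NSym
  | [], t =>
      match t [] with
      | some (.leaf a) => some (.leaf a)
      | some .app => some NSym.app
      | some .arrow => some NSym.arrow
      | some .union => some (.union (compPaths t).ncard)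
      | none => none
  | j :: π, t =>
      match t [] with
      | some .union =>
          if h : ∃ ρ, IsNthComp t j ρ then transLabel π (subtreeAt t h.choose)
          else none
      | some .app => if j < 2 then transLabel π (childT t (j == 1)) else none
      | some .arrow => if j < 2 then transLabel π (childT t (j == 1)) else none
      | _ => none

noncomputable def transN (t : PTree) : PTreeN := fun π => transLabel π t

/- ## Subtyping and equivalence up-to a relation ℛ on 𝔗ⁿ -/

def NSubStep (RR S : PTreeN → PTreeN → Prop) (A B : PTreeN) : Prop :=
  let P := fun x y => S x y ∨ RR x y
  (∃ a, A [] = some (.leaf a) ∧ B [] = some (.leaf a))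
  ∨ (A [] = some .app ∧ B [] = some .app ∧
      P (childN A 0) (childN B 0) ∧ P (childN A 1) (childN B 1))
  ∨ (A [] = some .arrow ∧ B [] = some .arrow ∧
      P (childN B 0) (childN A 0) ∧ P (childN A 1) (childN B 1))
  ∨ (∃ n m, A [] = some (.union n) ∧ B [] = some (.union m) ∧
      (∀ i < n, ¬ IsUnionRootN (childN A i)) ∧ (∀ j < m, ¬ IsUnionRootN (childN B j)) ∧
      ∃ f : ℕ → ℕ, ∀ i < n, f i < m ∧ P (childN A i) (childN B (f i)))
  ∨ (∃ n, A [] = some (.union n) ∧ ¬ IsUnionRootN B ∧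
      (∀ i < n, ¬ IsUnionRootN (childN A i)) ∧ ∀ i < n, P (childN A i) B)
  ∨ (∃ m, B [] = some (.union m) ∧ ¬ IsUnionRootN A ∧
      (∀ j < m, ¬ IsUnionRootN (childN B j)) ∧ ∃ k < m, P A (childN B k))

/-- The subtyping relation up-to `RR` on 𝔗ⁿ. -/
def SubN (RR : PTreeN → PTreeN → Prop) (A B : PTreeN) : Prop :=
  ∃ S : PTreeN → PTreeN → Prop, (∀ x y, S x y → NSubStep RR S x y) ∧ S A B

def NEqStep (RR S : PTreeN → PTreeN → Prop) (A B : PTreeN) : Prop :=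
  let P := fun x y => S x y ∨ RR x y
  (∃ a, A [] = some (.leaf a) ∧ B [] = some (.leaf a))
  ∨ (A [] = some .app ∧ B [] = some .app ∧
      P (childN A 0) (childN B 0) ∧ P (childN A 1) (childN B 1))
  ∨ (A [] = some .arrow ∧ B [] = some .arrow ∧
      P (childN A 0) (childN B 0) ∧ P (childN A 1) (childN B 1))
  ∨ (∃ n m, A [] = some (.union n) ∧ B [] = some (.union m) ∧
      (∀ i < n, ¬ IsUnionRootN (childN A i)) ∧ (∀ j < m, ¬ IsUnionRootN (childN B j)) ∧
      (∃ f : ℕ → ℕ, ∀ i < n, f i < m ∧ P (childN A i) (childN B (f i))) ∧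
      (∃ g : ℕ → ℕ, ∀ j < m, g j < n ∧ P (childN A (g j)) (childN B j)))
  ∨ (∃ n, A [] = some (.union n) ∧ ¬ IsUnionRootN B ∧
      (∀ i < n, ¬ IsUnionRootN (childN A i)) ∧ ∀ i < n, P (childN A i) B)
  ∨ (∃ m, B [] = some (.union m) ∧ ¬ IsUnionRootN A ∧
      (∀ j < m, ¬ IsUnionRootN (childN B j)) ∧ ∀ j < m, P A (childN B j))

/-- The equivalence relation up-to `RR` on 𝔗ⁿ. -/
def EqN (RR : PTreeN → PTreeN → Prop) (A B : PTreeN) : Prop :=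
  ∃ S : PTreeN → PTreeN → Prop, (∀ x y, S x y → NEqStep RR S x y) ∧ S A B

/- ## CAP: patterns, terms, matching, reduction, typing -/

inductive Pat : Type
  | matchv : ℕ → Pat
  | const : ℕ → Pat
  | comp : Pat → Pat → Pat

/-- Matchables of a pattern. -/
def Pat.mv : Pat → Set ℕ
  | .matchv x => {x}
  | .const _ => ∅
  | .comp p q => p.mv ∪ q.mv

/-- Linear patterns. -/
def Pat.Linear : Pat → Prop
  | .matchv _ => True
  | .const _ => True
  | .comp p q => p.Linear ∧ q.Linear ∧ ∀ x ∈ p.mv, x ∉ q.mv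

/-- Typing contexts (for terms and for matchables of patterns). -/
abbrev TyCtx := ℕ → Option MuTy

inductive Tm : Type
  | var : ℕ → Tm
  | const : ℕ → Tm
  | app : Tm → Tm → Tm
  | abs : List (Pat × TyCtx × Tm) → Tm

/-- Data structures. -/
def isDataB : Tm → Bool
  | .const _ => true
  | .app d _ => isDataB d
  | _ => false

/-- Matchable forms: data structures and abstractions. -/
def isMatchableB : Tm → Bool
  | .abs _ => true
  | t => isDataB t

/-- Outcome of matching. -/
inductive MOut : Type
  | subst : (ℕ → Option Tm) → MOut
  | fail : MOut
  | wait : MOut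

/-- Disjoint union of matching outcomes. -/
def MOut.join : MOut → MOut → MOut
  | .fail, _ => .fail
  | _, .fail => .fail
  | .wait, _ => .wait
  | _, .wait => .wait
  | .subst σ₁, .subst σ₂ => .subst (fun x => (σ₁ x).orElse (fun _ => σ₂ x))

/-- The matching operation `p ⋗ u`. -/
def pmatch : Pat → Tm → MOut
  | .matchv x, u => .subst (fun y => if y = x then some u else none)
  | .const c, .const c' => if c = c' then .subst (fun _ => none) else .fail
  | .comp p q, .app u v =>
      if isMatchableB (.app u v) then (pmatch p u).join (pmatch q v) else .wait
  | _, u => if isMatchableB u then .fail else .wait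

-- Applying a substitution to a term.
mutual
  def applySubst (σ : ℕ → Option Tm) : Tm → Tm
    | .var x => (σ x).getD (.var x)
    | .const c => .const c
    | .app t u => .app (applySubst σ t) (applySubst σ u)
    | .abs bs => .abs (applySubstBs σ bs)
  def applySubstBs (σ : ℕ → Option Tm) : List (Pat × TyCtx × Tm) → List (Pat × TyCtx × Tm)
    | [] => []
    | (p, θ, s) :: bs => (p, θ, applySubst σ s) :: applySubstBs σ bs
end

/-- Reduction, the context closure of the β-rule of CAP. -/
inductive Step : Tm → Tm → Prop
  | beta (bs : List (Pat × TyCtx × Tm)) (u : Tm) (j : ℕ) (hj : j < bs.length)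
      (σ : ℕ → Option Tm) :
      (∀ i (hi : i < bs.length), i < j → pmatch (bs.get ⟨i, hi⟩).1 u = .fail) →
      pmatch (bs.get ⟨j, hj⟩).1 u = .subst σ →
      Step (.app (.abs bs) u) (applySubst σ (bs.get ⟨j, hj⟩).2.2)
  | appL {t t' : Tm} (u : Tm) : Step t t' → Step (.app t u) (.app t' u)
  | appR (t : Tm) {u u' : Tm} : Step u u' → Step (.app t u) (.app t u')
  | abs (l r : List (Pat × TyCtx × Tm)) (p : Pat) (θ : TyCtx) {s s' : Tm} :
      Step s s' → Step (.abs (l ++ (p, θ, s) :: r)) (.abs (l ++ (p, θ, s') :: r))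

/-- All patterns occurring in a term are linear. -/
inductive TmWF : Tm → Prop
  | var (x : ℕ) : TmWF (.var x)
  | const (c : ℕ) : TmWF (.const c)
  | app {t u : Tm} : TmWF t → TmWF u → TmWF (.app t u)
  | abs {bs : List (Pat × TyCtx × Tm)} :
      (∀ b ∈ bs, b.1.Linear) → (∀ b ∈ bs, TmWF b.2.2) → TmWF (.abs bs)

-- Values.
mutual
  inductive Neut : Tm → Prop
    | var (x : ℕ) : Neut (.var x)
    | const (c : ℕ) : Neut (.const c)
    | app {t u : Tm} : Neut t → IsValue u → Neut (.app t u)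
  inductive IsValue : Tm → Prop
    | neut {t : Tm} : Neut t → IsValue t
    | abs (bs : List (Pat × TyCtx × Tm)) : IsValue (.abs bs)
end

/- ## Pattern typing and compatibility -/

inductive PatTy : TyCtx → Pat → MuTy → Prop
  | matchv {θ : TyCtx} {x : ℕ} {A : MuTy} : θ x = some A → PatTy θ (.matchv x) A
  | const (θ : TyCtx) (c : ℕ) : PatTy θ (.const c) (.const c)
  | comp {θ : TyCtx} {p q : Pat} {D A : MuTy} :
      PatTy θ p D → MuTy.IsData D → PatTy θ q A → PatTy θ (.comp p q) (.app D A)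

/-- Symbols admitted at a position of a μ-type. -/
inductive PSym : Type
  | var : Bool → ℕ → PSym
  | const : ℕ → PSym
  | arrow : PSym
  | app : PSym

/-- `Admits A π s`: the symbol `s` belongs to `A@π`. -/
inductive Admits : MuTy → List Bool → PSym → Prop
  | var (b : Bool) (v : ℕ) : Admits (.var b v) [] (.var b v)
  | const (c : ℕ) : Admits (.const c) [] (.const c)
  | arrowE (A B : MuTy) : Admits (.arrow A B) [] .arrow
  | appE (A B : MuTy) : Admits (.app A B) [] .app
  | arrow1 {A : MuTy} {π : List Bool} {s : PSym} (B : MuTy) :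
      Admits A π s → Admits (.arrow A B) (false :: π) s
  | arrow2 (A : MuTy) {B : MuTy} {π : List Bool} {s : PSym} :
      Admits B π s → Admits (.arrow A B) (true :: π) s
  | app1 {A : MuTy} {π : List Bool} {s : PSym} (B : MuTy) :
      Admits A π s → Admits (.app A B) (false :: π) s
  | app2 (A : MuTy) {B : MuTy} {π : List Bool} {s : PSym} :
      Admits B π s → Admits (.app A B) (true :: π) s
  | unionL {A : MuTy} {π : List Bool} {s : PSym} (B : MuTy) :
      Admits A π s → Admits (.union A B) π s
  | unionR (A : MuTy) {B : MuTy} {π : List Bool} {s : PSym} :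
      Admits B π s → Admits (.union A B) π s
  | mu {b : Bool} {v : ℕ} {A : MuTy} {π : List Bool} {s : PSym} :
      Admits (MuTy.subst b v (.mu b v A) A) π s → Admits (.mu b v A) π s

/-- Subpattern at a position. -/
def Pat.at? : Pat → List Bool → Option Pat
  | p, [] => some p
  | .comp p q, i :: π => if i then q.at? π else p.at? π
  | _, _ :: _ => none

/-- Applying a (pattern) substitution to a pattern. -/
def psubst (σ : ℕ → Option Pat) : Pat → Pat
  | .matchv x => (σ x).getD (.matchv x)
  | .const c => .const c
  | .comp p q => .comp (psubst σ p) (psubst σ q)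

/-- `p` subsumes `q`. -/
def Subsumes (p q : Pat) : Prop := ∃ σ, psubst σ p = q

def CommonPos (p q : Pat) (π : List Bool) : Prop :=
  (p.at? π).isSome ∧ (q.at? π).isSome

/-- Mismatching positions between two patterns. -/
def CPos (p q : Pat) (π : List Bool) : Prop :=
  CommonPos p q π ∧ (∀ π' : List Bool, π' ≠ [] → ¬ CommonPos p q (π ++ π')) ∧
  ∃ p' q', p.at? π = some p' ∧ q.at? π = some q' ∧ ¬ Subsumes p' q'

/-- Compatibility of `⟨θ ⊳ p : A⟩` with `⟨θ' ⊳ q : B⟩`. -/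
def Compat (p : Pat) (A : MuTy) (q : Pat) (B : MuTy) : Prop :=
  (∀ π, CPos p q π → ∃ s, Admits A π s ∧ Admits B π s) → Sub B A

def ctxDom (θ : TyCtx) : Set ℕ := {x | (θ x).isSome}

def ctxExt (Γ θ : TyCtx) : TyCtx := fun x => (θ x).orElse (fun _ => Γ x)

/-- `⊕` of a nonempty list of types. -/
def bigUnion : List MuTy → MuTy
  | [] => .const 0
  | [A] => A
  | A :: As => .union A (bigUnion As)

/- ## Term typing -/

inductive Ty : TyCtx → Tm → MuTy → Prop
  | var {Γ : TyCtx} {x : ℕ} {A : MuTy} : Γ x = some A → Ty Γ (.var x) A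
  | const (Γ : TyCtx) (c : ℕ) : Ty Γ (.const c) (.const c)
  | comp {Γ : TyCtx} {r u : Tm} {D A : MuTy} :
      Ty Γ r D → MuTy.IsData D → Ty Γ u A → Ty Γ (.app r u) (.app D A)
  | abs {Γ : TyCtx} (l : List ((Pat × TyCtx × Tm) × MuTy)) {B : MuTy} :
      l ≠ [] →
      (∀ i j (hi : i < l.length) (hj : j < l.length), i < j →
        Compat (l.get ⟨i, hi⟩).1.1 (l.get ⟨i, hi⟩).2
               (l.get ⟨j, hj⟩).1.1 (l.get ⟨j, hj⟩).2) →
      (∀ b ∈ l, PatTy b.1.2.1 b.1.1 b.2) →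
      (∀ b ∈ l, ctxDom b.1.2.1 = Pat.mv b.1.1) →
      (∀ b ∈ l, Ty (ctxExt Γ b.1.2.1) b.1.2.2 B) →
      Ty Γ (.abs (l.map Prod.fst)) (.arrow (bigUnion (l.map Prod.snd)) B)
  | app {Γ : TyCtx} {r u : Tm} {B : MuTy} (As : List MuTy) (k : ℕ) (hk : k < As.length) :
      Ty Γ r (.arrow (bigUnion As) B) →
      Ty Γ u (As.get ⟨k, hk⟩) →
      Ty Γ (.app r u) B
  | sub {Γ : TyCtx} {s : Tm} {A A' : MuTy} : Ty Γ s A → Sub A A' → Ty Γ s A'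

/- ## Syntax-directed term typing -/

inductive TySD : TyCtx → Tm → MuTy → Prop
  | var {Γ : TyCtx} {x : ℕ} {A : MuTy} : Γ x = some A → TySD Γ (.var x) A
  | const (Γ : TyCtx) (c : ℕ) : TySD Γ (.const c) (.const c)
  | comp {Γ : TyCtx} {r u : Tm} {D A : MuTy} :
      TySD Γ r D → MuTy.IsData D → TySD Γ u A → TySD Γ (.app r u) (.app D A)
  | abs {Γ : TyCtx} (l : List ((Pat × TyCtx × Tm) × MuTy × MuTy)) :
      l ≠ [] →
      (∀ i j (hi : i < l.length) (hj : j < l.length), i < j →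
        Compat (l.get ⟨i, hi⟩).1.1 (l.get ⟨i, hi⟩).2.1
               (l.get ⟨j, hj⟩).1.1 (l.get ⟨j, hj⟩).2.1) →
      (∀ b ∈ l, PatTy b.1.2.1 b.1.1 b.2.1) →
      (∀ b ∈ l, ctxDom b.1.2.1 = Pat.mv b.1.1) →
      (∀ b ∈ l, TySD (ctxExt Γ b.1.2.1) b.1.2.2 b.2.2) →
      TySD Γ (.abs (l.map Prod.fst))
        (.arrow (bigUnion (l.map (fun b => b.2.1))) (bigUnion (l.map (fun b => b.2.2))))
  | app {Γ : TyCtx} {r u : Tm} {A C : MuTy} (ABs : List (MuTy × MuTy)) :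
      ABs ≠ [] →
      TySD Γ r A →
      EqMu A (bigUnion (ABs.map (fun q => .arrow q.1 q.2))) →
      (∀ q ∈ ABs, ¬ (q.1).IsUnion) →
      TySD Γ u C →
      (∀ q ∈ ABs, Sub C q.1) →
      TySD Γ (.app r u) (bigUnion (ABs.map Prod.snd))



lemma subtreeAt_nil (t : PTree) : subtreeAt t [] = t := rfl

lemma subtree_root (t : PTree) (ρ : List Bool) : subtreeAt t ρ [] = t ρ := by
  simp [subtreeAt]

lemma subtreeAt_subtreeAt (t : PTree) (ρ σ : List Bool) :
    subtreeAt (subtreeAt t ρ) σ = subtreeAt t (ρ ++ σ) := by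
  funext π; simp [subtreeAt, List.append_assoc]

lemma childT_eq_subtreeAt (t : PTree) (i : Bool) : childT t i = subtreeAt t [i] := rfl

def Good (t : PTree) : Prop :=
  (t []).isSome = true ∧
  (∀ (π : List Bool) (i : Bool), (t (π ++ [i])).isSome ↔ ∃ s, t π = some s ∧ s.IsBinary) ∧
  ¬ ∃ (π : List Bool) (g : ℕ → Bool), ∀ n : ℕ, t (π ++ (List.range n).map g) = some TSym.union

lemma Good.subtree {t : PTree} (ht : Good t) {ρ : List Bool} (hρ : (t ρ).isSome) :
    Good (subtreeAt t ρ) := by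
  refine ⟨by simpa [subtree_root] using hρ, ?_, ?_⟩
  · intro π i
    have := ht.2.1 (ρ ++ π) i
    simpa [subtreeAt, List.append_assoc] using this
  · rintro ⟨π, g, hg⟩
    exact ht.2.2 ⟨ρ ++ π, g, fun n => by
      have := hg n; simpa [subtreeAt, List.append_assoc] using this⟩

lemma Good.child {t : PTree} (ht : Good t) {s : TSym} (hs : t [] = some s)
    (hb : s.IsBinary) (i : Bool) : Good (childT t i) := by
  have h : (t [i]).isSome := by
    have := (ht.2.1 [] i).mpr ⟨s, hs, hb⟩
    simpa using this
  rw [childT_eq_subtreeAt]; exact ht.subtree h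

lemma good_not_pred (P : PTree → Prop)
    (hP : ∀ u, Good u → P u →
      u [] = some TSym.union ∧ (P (childT u false) ∨ P (childT u true)))
    {t : PTree} (ht : Good t) : ¬ P t := by
  classical
  intro hpt
  let c : List Bool → Bool := fun ρ => if P (childT (subtreeAt t ρ) false) then false else true
  let f : ℕ → List Bool := fun n => Nat.rec [] (fun _ ρ => ρ ++ [c ρ]) n
  have hfs : ∀ n, f (n+1) = f n ++ [c (f n)] := fun n => rfl
  have inv : ∀ n, Good (subtreeAt t (f n)) ∧ P (subtreeAt t (f n)) := by
    intro n; induction n with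
    | zero => exact ⟨by rw [show f 0 = [] from rfl, subtreeAt_nil]; exact ht,
        by rw [show f 0 = [] from rfl, subtreeAt_nil]; exact hpt⟩
    | succ n ih =>
      obtain ⟨hg, hp⟩ := ih
      obtain ⟨hun, hor⟩ := hP _ hg hp
      have hsub : subtreeAt t (f (n+1)) = childT (subtreeAt t (f n)) (c (f n)) := by
        rw [hfs, ← subtreeAt_subtreeAt, ← childT_eq_subtreeAt]
      constructor
      · rw [hsub]; exact hg.child hun trivial _
      · rw [hsub]
        by_cases h : P (childT (subtreeAt t (f n)) false)
        · have hc : c (f n) = false := if_pos h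
          rw [hc]; exact h
        · have hc : c (f n) = true := if_neg h
          rw [hc]; rcases hor with h' | h'
          · exact absurd h' h
          · exact h'
  have hlab : ∀ n, t (f n) = some TSym.union := by
    intro n
    have := (hP _ (inv n).1 (inv n).2).1
    rwa [subtree_root] at this
  refine ht.2.2 ⟨[], fun n => c (f n), ?_⟩
  intro n
  have hr : (List.range n).map (fun k => c (f k)) = f n := by
    induction n with
    | zero => rfl
    | succ n ih => rw [List.range_succ, List.map_append, ih]; rfl
  simpa [hr] using hlab n

lemma isCompPath_nil {t : PTree} (h1 : (t []).isSome) (h2 : t [] ≠ some TSym.union) :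
    IsCompPath t [] :=
  ⟨fun ρ' h h' => absurd (List.prefix_nil.mp h) h', h1, h2⟩

lemma compPaths_of_ne_union {t : PTree} (h1 : (t []).isSome)
    (h2 : t [] ≠ some TSym.union) : compPaths t = {[]} := by
  ext ρ
  simp only [compPaths, Set.mem_setOf_eq, Set.mem_singleton_iff]
  constructor
  · rintro ⟨hpre, hs, hne⟩
    by_contra hρ
    exact h2 (hpre [] List.nil_prefix (fun h => hρ h.symm))
  · rintro rfl; exact isCompPath_nil h1 h2

lemma isCompPath_cons {t : PTree} (h : t [] = some TSym.union) (i : Bool) (ρ : List Bool) :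
    IsCompPath t (i :: ρ) ↔ IsCompPath (childT t i) ρ := by
  constructor
  · rintro ⟨hpre, hs, hne⟩
    exact ⟨fun σ hσ hσ' => hpre (i::σ) (List.cons_prefix_cons.mpr ⟨rfl, hσ⟩)
      (by simpa using hσ'), hs, hne⟩
  · rintro ⟨hpre, hs, hne⟩
    refine ⟨?_, hs, hne⟩
    intro ρ' hρ' hne'
    match ρ' with
    | [] => exact h
    | j :: σ =>
      obtain ⟨rfl, hσ⟩ := List.cons_prefix_cons.mp hρ'
      exact hpre σ hσ (fun hh => hne' (by rw [hh]))

lemma compPaths_nonempty {t : PTree} (ht : Good t) : (compPaths t).Nonempty := by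
  by_contra hne
  refine good_not_pred (fun u => ¬ (compPaths u).Nonempty) ?_ ht hne
  intro u hu hpu
  have hun : u [] = some TSym.union := by
    by_contra h
    exact hpu ⟨[], isCompPath_nil hu.1 h⟩
  refine ⟨hun, ?_⟩
  by_contra hcon
  obtain ⟨h1, h2⟩ := not_or.mp hcon
  obtain ⟨ρf, hf⟩ := not_not.mp h1
  exact hpu ⟨false :: ρf, (isCompPath_cons hun false ρf).mpr hf⟩

lemma compPaths_finite {t : PTree} (ht : Good t) : (compPaths t).Finite := by
  rw [← Set.not_infinite]
  refine good_not_pred (fun u => (compPaths u).Infinite) ?_ ht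
  intro u hu hinf
  have hun : u [] = some TSym.union := by
    by_contra h
    rw [compPaths_of_ne_union hu.1 h] at hinf
    exact hinf (Set.finite_singleton _)
  refine ⟨hun, ?_⟩
  by_contra hcon
  obtain ⟨h1, h2⟩ := not_or.mp hcon
  rw [Set.not_infinite] at h1 h2
  have hcon : (compPaths (childT u false)).Finite ∧ (compPaths (childT u true)).Finite := ⟨h1, h2⟩
  have hsub : compPaths u ⊆ (fun ρ => false :: ρ) '' compPaths (childT u false) ∪
      (fun ρ => true :: ρ) '' compPaths (childT u true) := by
    intro ρ hρ
    match ρ with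
    | [] => exact absurd hun hρ.2.2
    | false :: σ => exact Or.inl ⟨σ, (isCompPath_cons hun false σ).mp hρ, rfl⟩
    | true :: σ => exact Or.inr ⟨σ, (isCompPath_cons hun true σ).mp hρ, rfl⟩
  exact hinf (Set.Finite.subset ((hcon.1.image _).union (hcon.2.image _)) hsub)

lemma compPaths_prefix {t : PTree} {ρ ρ' : List Bool}
    (h : IsCompPath t ρ) (h' : IsCompPath t ρ') (hp : ρ <+: ρ') : ρ = ρ' := by
  by_contra hne
  exact h.2.2 (h'.1 ρ hp hne)


lemma pathKey_nonneg (ρ : List Bool) : 0 ≤ pathKey ρ := by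
  induction ρ with
  | nil => simp [pathKey]
  | cons b σ ih => cases b <;> simp [pathKey] <;> linarith

lemma pathKey_lt_two (ρ : List Bool) : pathKey ρ < 2 := by
  induction ρ with
  | nil => norm_num [pathKey]
  | cons b σ ih => cases b <;> simp [pathKey] <;> linarith

lemma pathKey_ne {ρ ρ' : List Bool} (h1 : ¬ ρ <+: ρ') (h2 : ¬ ρ' <+: ρ) :
    pathKey ρ ≠ pathKey ρ' := by
  induction ρ generalizing ρ' with
  | nil => exact absurd List.nil_prefix h1
  | cons b σ ih =>
    match ρ' with
    | [] => exact absurd List.nil_prefix h2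
    | b' :: σ' =>
      have hn2 := pathKey_lt_two σ
      have hn2' := pathKey_lt_two σ'
      have hn0 := pathKey_nonneg σ
      have hn0' := pathKey_nonneg σ'
      cases b <;> cases b'
      · have h1' : ¬ σ <+: σ' := fun h => h1 (List.cons_prefix_cons.mpr ⟨rfl, h⟩)
        have h2' : ¬ σ' <+: σ := fun h => h2 (List.cons_prefix_cons.mpr ⟨rfl, h⟩)
        have := ih h1' h2'
        simp only [pathKey, if_neg Bool.false_ne_true, Bool.false_eq_true, if_false]
        intro he
        exact this (by linarith)
      · simp only [pathKey]
        norm_num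
        intro he; linarith
      · simp only [pathKey]
        norm_num
        intro he; linarith
      · have h1' : ¬ σ <+: σ' := fun h => h1 (List.cons_prefix_cons.mpr ⟨rfl, h⟩)
        have h2' : ¬ σ' <+: σ := fun h => h2 (List.cons_prefix_cons.mpr ⟨rfl, h⟩)
        have := ih h1' h2'
        simp only [pathKey, if_pos rfl]
        intro he
        exact this (by linarith)

lemma pathKey_injOn {t : PTree} : Set.InjOn pathKey (compPaths t) := by
  intro ρ hρ ρ' hρ' he
  by_contra hne
  exact pathKey_ne (fun h => hne (compPaths_prefix hρ hρ' h))
    (fun h => hne ((compPaths_prefix hρ' hρ h).symm)) he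

section Enum

variable {α : Type} {k : α → ℚ} {S : Set α}

lemma enum_count_lt (hfin : S.Finite) {x : α} (hx : x ∈ S) :
    {y | y ∈ S ∧ k y < k x}.ncard < S.ncard := by
  have hss : {y | y ∈ S ∧ k y < k x} ⊂ S := by
    constructor
    · intro y hy; exact hy.1
    · intro hsub
      exact absurd (hsub hx).2 (lt_irrefl _)
  exact Set.ncard_lt_ncard hss hfin

lemma enum_count_injOn (hfin : S.Finite) (hinj : Set.InjOn k S) :
    ∀ x ∈ S, ∀ y ∈ S,
      {z | z ∈ S ∧ k z < k x}.ncard = {z | z ∈ S ∧ k z < k y}.ncard → x = y := by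
  have key : ∀ x ∈ S, ∀ y ∈ S, k x < k y →
      {z | z ∈ S ∧ k z < k x}.ncard < {z | z ∈ S ∧ k z < k y}.ncard := by
    intro x hx y hy hlt
    refine Set.ncard_lt_ncard ⟨fun z hz => ⟨hz.1, hz.2.trans hlt⟩, ?_⟩
      (hfin.subset (fun z hz => hz.1))
    intro hsub
    exact absurd (hsub ⟨hx, hlt⟩).2 (lt_irrefl _)
  intro x hx y hy he
  by_contra hne
  rcases lt_trichotomy (k x) (k y) with h | h | h
  · exact absurd he (key x hx y hy h).ne
  · exact hne (hinj hx hy h)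
  · exact absurd he.symm (key y hy x hx h).ne

lemma enum_count_surj (hfin : S.Finite) (hinj : Set.InjOn k S) :
    ∀ j < S.ncard, ∃ x ∈ S, {z | z ∈ S ∧ k z < k x}.ncard = j := by
  classical
  intro j hj
  set s : Finset α := hfin.toFinset with hs
  have hcoe : (↑s : Set α) = S := hfin.coe_toFinset
  set cnt : α → ℕ := fun x => {z | z ∈ S ∧ k z < k x}.ncard with hcnt
  have hinjc : Set.InjOn cnt ↑s := by
    rw [hcoe]
    intro x hx y hy he
    exact enum_count_injOn hfin hinj x hx y hy he
  have hcard : S.ncard = s.card := by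
    rw [Set.ncard_eq_toFinset_card _ hfin]
  have hsubr : s.image cnt ⊆ Finset.range S.ncard := by
    intro m hm
    obtain ⟨x, hx, rfl⟩ := Finset.mem_image.mp hm
    rw [Finset.mem_range]
    exact enum_count_lt hfin (by rw [← hcoe]; exact hx)
  have himg : s.image cnt = Finset.range S.ncard := by
    apply Finset.eq_of_subset_of_card_le hsubr
    rw [Finset.card_range, Finset.card_image_of_injOn hinjc, hcard]
  have : j ∈ s.image cnt := by rw [himg, Finset.mem_range]; exact hj
  obtain ⟨x, hx, hxe⟩ := Finset.mem_image.mp this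
  exact ⟨x, by rw [← hcoe]; exact hx, hxe⟩

end Enum

lemma isNthComp_exists {t : PTree} (ht : Good t) {j : ℕ}
    (hj : j < (compPaths t).ncard) : ∃ ρ, IsNthComp t j ρ := by
  obtain ⟨ρ, hρ, he⟩ := enum_count_surj (compPaths_finite ht) (pathKey_injOn) j hj
  exact ⟨ρ, hρ, he⟩

lemma isNthComp_unique {t : PTree} (ht : Good t) {j : ℕ} {ρ ρ' : List Bool}
    (h : IsNthComp t j ρ) (h' : IsNthComp t j ρ') : ρ = ρ' :=
  enum_count_injOn (compPaths_finite ht) (pathKey_injOn) ρ h.1 ρ' h'.1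
    (by
      have e : ∀ σ : List Bool, {z | z ∈ compPaths t ∧ pathKey z < pathKey σ}
          = {ρ'' | IsCompPath t ρ'' ∧ pathKey ρ'' < pathKey σ} := fun _ => rfl
      rw [e, e, h.2, h'.2])

lemma isNthComp_index {t : PTree} (ht : Good t) {ρ : List Bool}
    (hρ : IsCompPath t ρ) : ∃ j < (compPaths t).ncard, IsNthComp t j ρ :=
  ⟨_, enum_count_lt (compPaths_finite ht) hρ, hρ, rfl⟩


lemma transN_root_leaf {t : PTree} {a : Leaf} (h : t [] = some (.leaf a)) :
    transN t [] = some (.leaf a) := by simp [transN, transLabel, h]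

lemma transN_root_app {t : PTree} (h : t [] = some TSym.app) :
    transN t [] = some NSym.app := by simp [transN, transLabel, h]

lemma transN_root_arrow {t : PTree} (h : t [] = some TSym.arrow) :
    transN t [] = some NSym.arrow := by simp [transN, transLabel, h]

lemma transN_root_union {t : PTree} (h : t [] = some TSym.union) :
    transN t [] = some (.union (compPaths t).ncard) := by simp [transN, transLabel, h]

lemma transN_root_none {t : PTree} (h : t [] = none) :
    transN t [] = none := by simp [transN, transLabel, h]

lemma isUnionRootN_transN_iff {t : PTree} :
    IsUnionRootN (transN t) ↔ t [] = some TSym.union := by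
  constructor
  · rintro ⟨n, hn⟩
    rcases h : t [] with _ | s
    · rw [transN_root_none h] at hn; cases hn
    · cases s with
      | leaf a => rw [transN_root_leaf h] at hn; cases hn
      | app => rw [transN_root_app h] at hn; cases hn
      | arrow => rw [transN_root_arrow h] at hn; cases hn
      | union => rfl
  · intro h; exact ⟨_, transN_root_union h⟩

lemma transN_root_leaf_inv {t : PTree} {a : Leaf} (h : transN t [] = some (.leaf a)) :
    t [] = some (.leaf a) := by
  rcases h' : t [] with _ | s
  · rw [transN_root_none h'] at h; cases h
  · cases s with
    | leaf a' =>
      rw [transN_root_leaf h'] at h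
      cases h; rfl
    | app => rw [transN_root_app h'] at h; cases h
    | arrow => rw [transN_root_arrow h'] at h; cases h
    | union => rw [transN_root_union h'] at h; cases h

lemma transN_root_app_inv {t : PTree} (h : transN t [] = some NSym.app) :
    t [] = some TSym.app := by
  rcases h' : t [] with _ | s
  · rw [transN_root_none h'] at h; cases h
  · cases s with
    | leaf a' => rw [transN_root_leaf h'] at h; cases h
    | app => rfl
    | arrow => rw [transN_root_arrow h'] at h; cases h
    | union => rw [transN_root_union h'] at h; cases h

lemma transN_root_arrow_inv {t : PTree} (h : transN t [] = some NSym.arrow) :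
    t [] = some TSym.arrow := by
  rcases h' : t [] with _ | s
  · rw [transN_root_none h'] at h; cases h
  · cases s with
    | leaf a' => rw [transN_root_leaf h'] at h; cases h
    | app => rw [transN_root_app h'] at h; cases h
    | arrow => rfl
    | union => rw [transN_root_union h'] at h; cases h

lemma transN_root_union_inv {t : PTree} {n : ℕ} (h : transN t [] = some (NSym.union n)) :
    t [] = some TSym.union ∧ n = (compPaths t).ncard := by
  rcases h' : t [] with _ | s
  · rw [transN_root_none h'] at h; cases h
  · cases s with
    | leaf a' => rw [transN_root_leaf h'] at h; cases h
    | app => rw [transN_root_app h'] at h; cases h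
    | arrow => rw [transN_root_arrow h'] at h; cases h
    | union =>
      rw [transN_root_union h'] at h
      cases h; exact ⟨rfl, rfl⟩

lemma childN_transN_bin {t : PTree} {s : TSym} (h : t [] = some s)
    (hs : s = TSym.app ∨ s = TSym.arrow) {j : ℕ} (hj : j < 2) :
    childN (transN t) j = transN (childT t (j == 1)) := by
  funext π
  rcases hs with rfl | rfl <;> simp [childN, transN, transLabel, h, hj]

lemma childN_transN_bin0 {t : PTree} {s : TSym} (h : t [] = some s)
    (hs : s = TSym.app ∨ s = TSym.arrow) :
    childN (transN t) 0 = transN (childT t false) :=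
  childN_transN_bin h hs (by norm_num)

lemma childN_transN_bin1 {t : PTree} {s : TSym} (h : t [] = some s)
    (hs : s = TSym.app ∨ s = TSym.arrow) :
    childN (transN t) 1 = transN (childT t true) :=
  childN_transN_bin h hs (by norm_num)

lemma childN_transN_union {t : PTree} (ht : Good t) (h : t [] = some TSym.union)
    {j : ℕ} {ρ : List Bool} (hρ : IsNthComp t j ρ) :
    childN (transN t) j = transN (subtreeAt t ρ) := by
  funext π
  have hex : ∃ ρ', IsNthComp t j ρ' := ⟨ρ, hρ⟩
  have hch : hex.choose = ρ := isNthComp_unique ht hex.choose_spec hρ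
  show transLabel (j :: π) t = transLabel π (subtreeAt t ρ)
  rw [transLabel, h]
  simp only [dif_pos hex]
  rw [hch]

lemma good_comp_sub {t : PTree} (ht : Good t) {ρ : List Bool} (hρ : IsCompPath t ρ) :
    Good (subtreeAt t ρ) := ht.subtree hρ.2.1

lemma comp_sub_ne_union {t : PTree} {ρ : List Bool} (hρ : IsCompPath t ρ) :
    subtreeAt t ρ [] ≠ some TSym.union := by
  rw [subtree_root]; exact hρ.2.2


def TransRel (R : PTree → PTree → Prop) : PTreeN → PTreeN → Prop :=
  fun X Y => ∃ t u, Good t ∧ Good u ∧ R t u ∧ X = transN t ∧ Y = transN u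

lemma mem_singleton_path {u' : PTree} (hu' : Good u') (h2 : u' [] ≠ some TSym.union)
    {ρ : List Bool} (hρ : ρ ∈ compPaths u') : ρ = [] := by
  have h3 : ρ ∈ ({[]} : Set (List Bool)) := by
    rw [← compPaths_of_ne_union hu'.1 h2]; exact hρ
  simpa using h3

lemma eqT_to_eqN {t u : PTree} (ht : Good t) (hu : Good u) (h : EqT t u) :
    EqN (fun _ _ => False) (transN t) (transN u) := by
  classical
  obtain ⟨R, hR, htu⟩ := h
  refine ⟨TransRel R, ?_, t, u, ht, hu, htu, rfl, rfl⟩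
  rintro X Y ⟨t', u', ht', hu', hr, rfl, rfl⟩
  have hstep := hR _ _ hr
  rcases hstep with ⟨a, h1, h2⟩ | ⟨h1, h2, hc0, hc1⟩ | ⟨h1, h2, hc0, hc1⟩ | ⟨hor, hfwd, hbwd⟩
  · exact Or.inl ⟨a, transN_root_leaf h1, transN_root_leaf h2⟩
  · refine Or.inr (Or.inl ⟨transN_root_app h1, transN_root_app h2, Or.inl ?_, Or.inl ?_⟩)
    · rw [childN_transN_bin0 h1 (Or.inl rfl), childN_transN_bin0 h2 (Or.inl rfl)]
      exact ⟨_, _, ht'.child h1 trivial false, hu'.child h2 trivial false, hc0, rfl, rfl⟩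
    · rw [childN_transN_bin1 h1 (Or.inl rfl), childN_transN_bin1 h2 (Or.inl rfl)]
      exact ⟨_, _, ht'.child h1 trivial true, hu'.child h2 trivial true, hc1, rfl, rfl⟩
  · refine Or.inr (Or.inr (Or.inl
      ⟨transN_root_arrow h1, transN_root_arrow h2, Or.inl ?_, Or.inl ?_⟩))
    · rw [childN_transN_bin0 h1 (Or.inr rfl), childN_transN_bin0 h2 (Or.inr rfl)]
      exact ⟨_, _, ht'.child h1 trivial false, hu'.child h2 trivial false, hc0, rfl, rfl⟩
    · rw [childN_transN_bin1 h1 (Or.inr rfl), childN_transN_bin1 h2 (Or.inr rfl)]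
      exact ⟨_, _, ht'.child h1 trivial true, hu'.child h2 trivial true, hc1, rfl, rfl⟩
  · by_cases h1 : t' [] = some TSym.union <;> by_cases h2 : u' [] = some TSym.union
    · -- both union
      refine Or.inr (Or.inr (Or.inr (Or.inl ?_)))
      refine ⟨(compPaths t').ncard, (compPaths u').ncard, transN_root_union h1,
        transN_root_union h2, ?_, ?_, ?_, ?_⟩
      · intro i hi
        obtain ⟨ρ, hρ⟩ := isNthComp_exists ht' hi
        rw [childN_transN_union ht' h1 hρ, isUnionRootN_transN_iff]
        exact comp_sub_ne_union hρ.1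
      · intro jj hj
        obtain ⟨ρ, hρ⟩ := isNthComp_exists hu' hj
        rw [childN_transN_union hu' h2 hρ, isUnionRootN_transN_iff]
        exact comp_sub_ne_union hρ.1
      · have key : ∀ i, i < (compPaths t').ncard → ∃ jj, jj < (compPaths u').ncard ∧
            (TransRel R (childN (transN t') i) (childN (transN u') jj) ∨ False) := by
          intro i hi
          obtain ⟨ρ, hρ⟩ := isNthComp_exists ht' hi
          obtain ⟨ρ', hρ', hrr⟩ := hfwd ρ hρ.1
          obtain ⟨jj, hjj, hnth⟩ := isNthComp_index hu' hρ'
          refine ⟨jj, hjj, Or.inl ?_⟩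
          rw [childN_transN_union ht' h1 hρ, childN_transN_union hu' h2 hnth]
          exact ⟨_, _, good_comp_sub ht' hρ.1, good_comp_sub hu' hρ', hrr, rfl, rfl⟩
        refine ⟨fun i => if h : i < (compPaths t').ncard then (key i h).choose else 0, ?_⟩
        intro i hi
        simp only [dif_pos hi]
        exact (key i hi).choose_spec
      · have key : ∀ jj, jj < (compPaths u').ncard → ∃ i, i < (compPaths t').ncard ∧
            (TransRel R (childN (transN t') i) (childN (transN u') jj) ∨ False) := by
          intro jj hj
          obtain ⟨ρ', hρ'⟩ := isNthComp_exists hu' hj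
          obtain ⟨ρ, hρmem, hrr⟩ := hbwd ρ' hρ'.1
          obtain ⟨i, hi, hnth⟩ := isNthComp_index ht' hρmem
          refine ⟨i, hi, Or.inl ?_⟩
          rw [childN_transN_union ht' h1 hnth, childN_transN_union hu' h2 hρ']
          exact ⟨_, _, good_comp_sub ht' hρmem, good_comp_sub hu' hρ'.1, hrr, rfl, rfl⟩
        refine ⟨fun jj => if h : jj < (compPaths u').ncard then (key jj h).choose else 0, ?_⟩
        intro jj hj
        simp only [dif_pos hj]
        exact (key jj hj).choose_spec
    · -- t' union, u' not
      refine Or.inr (Or.inr (Or.inr (Or.inr (Or.inl ?_))))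
      refine ⟨(compPaths t').ncard, transN_root_union h1,
        (by rw [isUnionRootN_transN_iff]; exact h2), ?_, ?_⟩
      · intro i hi
        obtain ⟨ρ, hρ⟩ := isNthComp_exists ht' hi
        rw [childN_transN_union ht' h1 hρ, isUnionRootN_transN_iff]
        exact comp_sub_ne_union hρ.1
      · intro i hi
        obtain ⟨ρ, hρ⟩ := isNthComp_exists ht' hi
        obtain ⟨ρ', hρ', hrr⟩ := hfwd ρ hρ.1
        have hnil : ρ' = [] := mem_singleton_path hu' h2 hρ'
        subst hnil
        rw [subtreeAt_nil] at hrr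
        refine Or.inl ?_
        rw [childN_transN_union ht' h1 hρ]
        exact ⟨_, _, good_comp_sub ht' hρ.1, hu', hrr, rfl, rfl⟩
    · -- u' union, t' not
      refine Or.inr (Or.inr (Or.inr (Or.inr (Or.inr ?_))))
      refine ⟨(compPaths u').ncard, transN_root_union h2,
        (by rw [isUnionRootN_transN_iff]; exact h1), ?_, ?_⟩
      · intro jj hj
        obtain ⟨ρ, hρ⟩ := isNthComp_exists hu' hj
        rw [childN_transN_union hu' h2 hρ, isUnionRootN_transN_iff]
        exact comp_sub_ne_union hρ.1
      · intro jj hj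
        obtain ⟨ρ', hρ'⟩ := isNthComp_exists hu' hj
        obtain ⟨ρ, hρmem, hrr⟩ := hbwd ρ' hρ'.1
        have hnil : ρ = [] := mem_singleton_path ht' h1 hρmem
        subst hnil
        rw [subtreeAt_nil] at hrr
        refine Or.inl ?_
        rw [childN_transN_union hu' h2 hρ']
        exact ⟨_, _, ht', good_comp_sub hu' hρ'.1, hrr, rfl, rfl⟩
    · rcases hor with h | h
      · exact absurd h h1
      · exact absurd h h2


lemma eqN_to_eqT {t u : PTree} (ht : Good t) (hu : Good u)
    (h : EqN (fun _ _ => False) (transN t) (transN u)) : EqT t u := by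
  obtain ⟨S, hS, hst⟩ := h
  refine ⟨fun t' u' => Good t' ∧ Good u' ∧ S (transN t') (transN u'), ?_, ht, hu, hst⟩
  rintro t' u' ⟨ht', hu', hs⟩
  have hstep := hS _ _ hs
  simp only [NEqStep, or_false] at hstep
  rcases hstep with ⟨a, h1, h2⟩ | ⟨h1, h2, hc0, hc1⟩ | ⟨h1, h2, hc0, hc1⟩ |
    ⟨n, m, h1, h2, _, _, ⟨f, hf⟩, ⟨g, hg⟩⟩ | ⟨n, h1, h2, _, hall⟩ | ⟨m, h1, h2, _, hall⟩
  · exact Or.inl ⟨a, transN_root_leaf_inv h1, transN_root_leaf_inv h2⟩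
  · have h1' := transN_root_app_inv h1
    have h2' := transN_root_app_inv h2
    rw [childN_transN_bin0 h1' (Or.inl rfl), childN_transN_bin0 h2' (Or.inl rfl)] at hc0
    rw [childN_transN_bin1 h1' (Or.inl rfl), childN_transN_bin1 h2' (Or.inl rfl)] at hc1
    exact Or.inr (Or.inl ⟨h1', h2',
      ⟨ht'.child h1' trivial false, hu'.child h2' trivial false, hc0⟩,
      ⟨ht'.child h1' trivial true, hu'.child h2' trivial true, hc1⟩⟩)
  · have h1' := transN_root_arrow_inv h1
    have h2' := transN_root_arrow_inv h2
    rw [childN_transN_bin0 h1' (Or.inr rfl), childN_transN_bin0 h2' (Or.inr rfl)] at hc0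
    rw [childN_transN_bin1 h1' (Or.inr rfl), childN_transN_bin1 h2' (Or.inr rfl)] at hc1
    exact Or.inr (Or.inr (Or.inl ⟨h1', h2',
      ⟨ht'.child h1' trivial false, hu'.child h2' trivial false, hc0⟩,
      ⟨ht'.child h1' trivial true, hu'.child h2' trivial true, hc1⟩⟩))
  · -- union-union
    obtain ⟨h1', rfl⟩ := transN_root_union_inv h1
    obtain ⟨h2', rfl⟩ := transN_root_union_inv h2
    refine Or.inr (Or.inr (Or.inr ⟨Or.inl h1', ?_, ?_⟩))
    · intro ρ hρ
      obtain ⟨i, hi, hnth⟩ := isNthComp_index ht' hρ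
      obtain ⟨hfi, hsi⟩ := hf i hi
      obtain ⟨ρ', hρ'⟩ := isNthComp_exists hu' hfi
      rw [childN_transN_union ht' h1' hnth, childN_transN_union hu' h2' hρ'] at hsi
      exact ⟨ρ', hρ'.1, good_comp_sub ht' hρ, good_comp_sub hu' hρ'.1, hsi⟩
    · intro ρ' hρ'
      obtain ⟨jj, hj, hnth⟩ := isNthComp_index hu' hρ'
      obtain ⟨hgj, hsj⟩ := hg jj hj
      obtain ⟨ρ, hρ⟩ := isNthComp_exists ht' hgj
      rw [childN_transN_union ht' h1' hρ, childN_transN_union hu' h2' hnth] at hsj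
      exact ⟨ρ, hρ.1, good_comp_sub ht' hρ.1, good_comp_sub hu' hρ', hsj⟩
  · -- trans t' union, u' not
    obtain ⟨h1', rfl⟩ := transN_root_union_inv h1
    have h2' : u' [] ≠ some TSym.union := fun hh => h2 (isUnionRootN_transN_iff.mpr hh)
    refine Or.inr (Or.inr (Or.inr ⟨Or.inl h1', ?_, ?_⟩))
    · intro ρ hρ
      obtain ⟨i, hi, hnth⟩ := isNthComp_index ht' hρ
      have hsi := hall i hi
      rw [childN_transN_union ht' h1' hnth] at hsi
      refine ⟨[], ?_, ?_⟩
      · rw [compPaths_of_ne_union hu'.1 h2']; rfl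
      · rw [subtreeAt_nil]
        exact ⟨good_comp_sub ht' hρ, hu', hsi⟩
    · intro ρ' hρ'
      have hnil : ρ' = [] := mem_singleton_path hu' h2' hρ'
      subst hnil
      have hpos : 0 < (compPaths t').ncard := by
        rw [Set.ncard_pos (compPaths_finite ht')]
        exact compPaths_nonempty ht'
      obtain ⟨ρ, hρ⟩ := isNthComp_exists ht' hpos
      have hsi := hall 0 hpos
      rw [childN_transN_union ht' h1' hρ] at hsi
      refine ⟨ρ, hρ.1, ?_⟩
      rw [subtreeAt_nil]
      exact ⟨good_comp_sub ht' hρ.1, hu', hsi⟩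
  · -- u' union, t' not
    obtain ⟨h2', rfl⟩ := transN_root_union_inv h1
    have h1' : t' [] ≠ some TSym.union := fun hh => h2 (isUnionRootN_transN_iff.mpr hh)
    refine Or.inr (Or.inr (Or.inr ⟨Or.inr h2', ?_, ?_⟩))
    · intro ρ hρ
      have hnil : ρ = [] := mem_singleton_path ht' h1' hρ
      subst hnil
      have hpos : 0 < (compPaths u').ncard := by
        rw [Set.ncard_pos (compPaths_finite hu')]
        exact compPaths_nonempty hu'
      obtain ⟨ρ', hρ'⟩ := isNthComp_exists hu' hpos
      have hsj := hall 0 hpos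
      rw [childN_transN_union hu' h2' hρ'] at hsj
      refine ⟨ρ', hρ'.1, ?_⟩
      rw [subtreeAt_nil]
      exact ⟨ht', good_comp_sub hu' hρ'.1, hsj⟩
    · intro ρ' hρ'
      obtain ⟨jj, hj, hnth⟩ := isNthComp_index hu' hρ'
      have hsj := hall jj hj
      rw [childN_transN_union hu' h2' hnth] at hsj
      refine ⟨[], ?_, ?_⟩
      · rw [compPaths_of_ne_union ht'.1 h1']; rfl
      · rw [subtreeAt_nil]
        exact ⟨ht', good_comp_sub hu' hρ', hsj⟩

lemma ITree.good (A : ITree) : Good A.label :=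
  ⟨A.root_isSome, A.child_iff, A.noUnionBranch⟩


/- STATEMENT 18 -/

theorem eqT_iff_eqN (A B : ITree) :
    EqT A.label B.label ↔
      EqN (fun _ _ => False) (transN A.label) (transN B.label) := by
  exact ⟨eqT_to_eqN A.good B.good, eqN_to_eqT A.good B.good⟩

end CAPPaper
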